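/- Let A be an N×N real symmetric positive semi-definite matrix with eigenvalues β₁ ≥ ... ≥ β_N, u_N a unit eigenvector for β_N, and y ≠ 0 a real vector with y_N = u_Nᵀy, gap = β_{N-1} - β_N, ξ = |y_N| + √(‖y‖² - y_N²). Then λ_min(A + yyᵀ) ≥ min{β_N + y_N²·gap/(gap + ξ²), β_{N-1}·y_N²/ξ²} (with the second term interpreted appropriately when ξ = 0). -/

import Mathlib

set_option maxHeartbeats 1000000

open Matrix Finset

section Aux

lemma sum_dot' {n : ℕ} (b : OrthonormalBasis (Fin n) ℝ (EuclideanSpace ℝ (Fin n)))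
    (x z : Fin n → ℝ) :
    ∑ i, ((b i : Fin n → ℝ) ⬝ᵥ x) * ((b i : Fin n → ℝ) ⬝ᵥ z) = x ⬝ᵥ z := by
  have h := b.sum_inner_mul_inner (𝕜 := ℝ)
    ((WithLp.equiv 2 _).symm x) ((WithLp.equiv 2 _).symm z)
  simp only [PiLp.inner_apply, RCLike.inner_apply, starRingEnd_apply, star_trivial,
    WithLp.equiv_symm_apply] at h
  simpa [dotProduct, mul_comm] using h

lemma unit_dot' {n : ℕ} (b : OrthonormalBasis (Fin n) ℝ (EuclideanSpace ℝ (Fin n)))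
    (i : Fin n) : (b i : Fin n → ℝ) ⬝ᵥ (b i : Fin n → ℝ) = 1 := by
  have h := b.orthonormal.1 i
  have h2 : (inner ℝ (b i) (b i) : ℝ) = 1 := by
    rw [real_inner_self_eq_norm_sq, h]; norm_num
  simp only [PiLp.inner_apply, RCLike.inner_apply, starRingEnd_apply, star_trivial] at h2
  simpa [dotProduct] using h2

lemma key_scalar' (βN G ξ yN b s P t c : ℝ)
    (hβN : 0 ≤ βN) (hG : 0 ≤ G) (hb : 0 ≤ b) (hs : 0 ≤ s)
    (hξd : ξ = |yN| + b) (hξpos : 0 < ξ)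
    (hP : P ^ 2 ≤ b ^ 2 * s ^ 2)
    (ht : t = min (βN + yN ^ 2 * (G / (G + ξ ^ 2))) ((βN + G) * yN ^ 2 / ξ ^ 2)) :
    t * (c ^ 2 + s ^ 2) ≤ βN * c ^ 2 + (βN + G) * s ^ 2 + (c * yN + P) ^ 2 := by
  set a := |yN| with ha
  have ha0 : 0 ≤ a := abs_nonneg _
  have ha2 : a ^ 2 = yN ^ 2 := sq_abs _
  have hc0 : 0 ≤ |c| := abs_nonneg _
  have hc2 : |c| ^ 2 = c ^ 2 := sq_abs _
  have hcs : (0:ℝ) ≤ c ^ 2 + s ^ 2 := by positivity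
  have hGξ : 0 < G + ξ ^ 2 := by positivity
  rcases le_or_gt (|c| * a) (s * b) with hcase | hcase
  · have h1 : t ≤ (βN + G) * yN ^ 2 / ξ ^ 2 := ht ▸ min_le_right _ _
    have h2 : t * (c ^ 2 + s ^ 2) ≤ ((βN + G) * yN ^ 2 / ξ ^ 2) * (c ^ 2 + s ^ 2) :=
      mul_le_mul_of_nonneg_right h1 hcs
    refine h2.trans ?_
    have hsq : 0 ≤ (c * yN + P) ^ 2 := sq_nonneg _
    have hβc : 0 ≤ βN * c ^ 2 := by positivity
    have hyb : yN ^ 2 * (c ^ 2 + s ^ 2) ≤ s ^ 2 * ξ ^ 2 := by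
      rw [← ha2, hξd]
      nlinarith [mul_le_mul hcase hcase (by positivity) (by positivity),
        mul_nonneg (mul_nonneg hs hs) (mul_nonneg ha0 hb)]
    have key : (βN + G) * yN ^ 2 * (c ^ 2 + s ^ 2) ≤ ((βN + G) * s ^ 2) * ξ ^ 2 := by
      calc (βN + G) * yN ^ 2 * (c ^ 2 + s ^ 2) = (βN + G) * (yN ^ 2 * (c ^ 2 + s ^ 2)) := by ring
        _ ≤ (βN + G) * (s ^ 2 * ξ ^ 2) := mul_le_mul_of_nonneg_left hyb (by positivity)
        _ = ((βN + G) * s ^ 2) * ξ ^ 2 := by ring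
    calc ((βN + G) * yN ^ 2 / ξ ^ 2) * (c ^ 2 + s ^ 2)
        = ((βN + G) * yN ^ 2 * (c ^ 2 + s ^ 2)) / ξ ^ 2 := by ring
      _ ≤ (βN + G) * s ^ 2 := by
          rw [div_le_iff₀ (by positivity : (0:ℝ) < ξ ^ 2)]; linarith
      _ ≤ βN * c ^ 2 + (βN + G) * s ^ 2 + (c * yN + P) ^ 2 := by linarith
  · have h1 : t ≤ βN + yN ^ 2 * (G / (G + ξ ^ 2)) := ht ▸ min_le_left _ _
    have h2 : t * (c ^ 2 + s ^ 2) ≤ (βN + yN ^ 2 * (G / (G + ξ ^ 2))) * (c ^ 2 + s ^ 2) :=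
      mul_le_mul_of_nonneg_right h1 hcs
    refine h2.trans ?_
    have habsP : |P| ≤ s * b := by
      have h3 : Real.sqrt (P ^ 2) ≤ Real.sqrt ((s * b) ^ 2) := by
        apply Real.sqrt_le_sqrt; nlinarith
      rwa [Real.sqrt_sq_eq_abs, Real.sqrt_sq (mul_nonneg hs hb)] at h3
    have hQ : (|c| * a - s * b) ^ 2 ≤ (c * yN + P) ^ 2 := by
      have h4 : |c| * a - s * b ≤ |c * yN + P| := by
        have h7 := abs_add_le (c * yN + P) (-P)
        simp only [add_neg_cancel_right, abs_neg] at h7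
        have h5 : |c * yN| = |c| * a := by rw [abs_mul]
        linarith [h7, habsP]
      have h6 : (0:ℝ) ≤ |c| * a - s * b := by linarith
      calc (|c| * a - s * b) ^ 2 ≤ |c * yN + P| ^ 2 := by
            exact pow_le_pow_left₀ h6 h4 2
        _ = (c * yN + P) ^ 2 := sq_abs _
    have hid : ξ ^ 2 * ((G + ξ ^ 2) * (G * s ^ 2 + (|c| * a - s * b) ^ 2)
          - G * a ^ 2 * (|c| ^ 2 + s ^ 2))
        = (a * ξ ^ 2 * |c| - b * (G + ξ ^ 2) * s) ^ 2
          + a * G * (G * (a + 2 * b) + 2 * ξ ^ 2 * b) * s ^ 2 := by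
      rw [hξd]; ring
    have hX : 0 ≤ (G + ξ ^ 2) * (G * s ^ 2 + (|c| * a - s * b) ^ 2)
        - G * a ^ 2 * (|c| ^ 2 + s ^ 2) := by
      have h0 : 0 ≤ ξ ^ 2 * ((G + ξ ^ 2) * (G * s ^ 2 + (|c| * a - s * b) ^ 2)
          - G * a ^ 2 * (|c| ^ 2 + s ^ 2)) := by
        rw [hid]; positivity
      exact nonneg_of_mul_nonneg_right h0 (by positivity)
    have hdiv : yN ^ 2 * (G / (G + ξ ^ 2)) * (c ^ 2 + s ^ 2)
        ≤ G * s ^ 2 + (|c| * a - s * b) ^ 2 := by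
      rw [show yN ^ 2 * (G / (G + ξ ^ 2)) * (c ^ 2 + s ^ 2)
          = (G * a ^ 2 * (|c| ^ 2 + s ^ 2)) / (G + ξ ^ 2) by rw [ha2, hc2]; ring]
      rw [div_le_iff₀ hGξ]
      nlinarith [hX]
    linarith [hdiv, hQ]

lemma eig_perp_bound {n : ℕ} (hn : 2 ≤ n)
    (A : Matrix (Fin n) (Fin n) ℝ) (hA : A.PosSemidef)
    (β : Fin n → ℝ) (hmono : Antitone β)
    (hperm : ∃ σ : Equiv.Perm (Fin n), β = hA.isHermitian.eigenvalues ∘ σ)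
    (uN : Fin n → ℝ) (hunit : ∑ i, uN i ^ 2 = 1)
    (heig : A.mulVec uN = β ⟨n - 1, Nat.sub_lt (by omega) Nat.one_pos⟩ • uN) :
    ∀ z : Fin n → ℝ, uN ⬝ᵥ z = 0 →
      β ⟨n - 2, Nat.sub_lt (by omega) Nat.two_pos⟩ * (z ⬝ᵥ z) ≤ z ⬝ᵥ A *ᵥ z := by
  obtain ⟨σ, hσ⟩ := hperm
  set lN : Fin n := ⟨n - 1, by omega⟩
  set l1 : Fin n := ⟨n - 2, by omega⟩
  set μ := hA.isHermitian.eigenvalues with hμdef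
  set v : Fin n → Fin n → ℝ := fun i => ⇑(hA.isHermitian.eigenvectorBasis i) with hvdef
  have hβμ : ∀ j, β j = μ (σ j) := fun j => by rw [hσ]; rfl
  have hdot : ∀ x z : Fin n → ℝ, ∑ i, (v i ⬝ᵥ x) * (v i ⬝ᵥ z) = x ⬝ᵥ z :=
    fun x z => sum_dot' _ x z
  have hAt : Aᵀ = A := by
    have := hA.isHermitian.eq
    rwa [Matrix.conjTranspose_eq_transpose_of_trivial] at this
  have hsym : ∀ x z : Fin n → ℝ, x ⬝ᵥ A *ᵥ z = (A *ᵥ x) ⬝ᵥ z := by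
    intro x z
    rw [Matrix.dotProduct_mulVec, ← Matrix.mulVec_transpose, hAt]
  have hAv : ∀ i, A *ᵥ v i = μ i • v i := fun i =>
    hA.isHermitian.mulVec_eigenvectorBasis i
  have hvAz : ∀ i (z : Fin n → ℝ), v i ⬝ᵥ (A *ᵥ z) = μ i * (v i ⬝ᵥ z) := by
    intro i z
    rw [hsym, hAv, smul_dotProduct]
    rfl
  have hquad : ∀ z : Fin n → ℝ, z ⬝ᵥ A *ᵥ z = ∑ i, μ i * (v i ⬝ᵥ z) ^ 2 := by
    intro z
    rw [← hdot z (A *ᵥ z)]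
    refine Finset.sum_congr rfl fun i _ => ?_
    rw [hvAz]; ring
  have hβmin : ∀ j : Fin n, β lN ≤ β j := by
    intro j
    apply hmono
    rw [Fin.le_def]
    have := j.isLt
    simp only [lN]
    omega
  have hμmin : ∀ i, β lN ≤ μ i := by
    intro i
    have h := hβmin (σ⁻¹ i)
    rw [hβμ (σ⁻¹ i), Equiv.Perm.inv_def, Equiv.apply_symm_apply] at h
    exact h
  intro z hz
  rcases le_or_gt (β l1) (β lN) with hcase | hcase
  · rw [hquad, ← hdot z z, Finset.mul_sum]
    refine Finset.sum_le_sum fun i _ => ?_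
    have h1 : β l1 ≤ μ i := le_trans hcase (hμmin i)
    calc β l1 * ((v i ⬝ᵥ z) * (v i ⬝ᵥ z)) = β l1 * (v i ⬝ᵥ z) ^ 2 := by ring
      _ ≤ μ i * (v i ⬝ᵥ z) ^ 2 := mul_le_mul_of_nonneg_right h1 (sq_nonneg _)
  · set k := σ lN with hk
    have hμk : μ k = β lN := (hβμ lN).symm
    have hμother : ∀ i, i ≠ k → β l1 ≤ μ i := by
      intro i hi
      have hne : σ⁻¹ i ≠ lN := fun h =>
        hi (by rw [hk, ← h]; exact (σ.apply_symm_apply i).symm)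
      have hle : σ⁻¹ i ≤ l1 := by
        rw [Fin.le_def]
        have h1 := (σ⁻¹ i).isLt
        have h2 : ((σ⁻¹ i : Fin n) : ℕ) ≠ n - 1 := fun h => hne (Fin.ext (by simpa [lN] using h))
        simp only [l1]
        omega
      have h := hmono hle
      rw [hβμ (σ⁻¹ i), Equiv.Perm.inv_def, Equiv.apply_symm_apply] at h
      exact h
    have hbzero : ∀ i, i ≠ k → v i ⬝ᵥ uN = 0 := by
      intro i hi
      have h1 : v i ⬝ᵥ (A *ᵥ uN) = μ i * (v i ⬝ᵥ uN) := hvAz i uN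
      rw [heig, dotProduct_smul] at h1
      have h2 : (μ i - β lN) * (v i ⬝ᵥ uN) = 0 := by
        have h5 : β lN * (v i ⬝ᵥ uN) = μ i * (v i ⬝ᵥ uN) := h1
        linear_combination -h5
      have h3 : β lN < μ i := lt_of_lt_of_le hcase (hμother i hi)
      rcases mul_eq_zero.mp h2 with h4 | h4
      · exact absurd h4 (sub_ne_zero.mpr h3.ne')
      · exact h4
    have huu : uN ⬝ᵥ uN = 1 := by
      rw [← hunit]
      exact Finset.sum_congr rfl fun i _ => by ring
    have hsum2 : ∑ i, (v i ⬝ᵥ uN) * (v i ⬝ᵥ uN) = (v k ⬝ᵥ uN) * (v k ⬝ᵥ uN) :=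
      Finset.sum_eq_single k (fun i _ hi => by rw [hbzero i hi]; ring)
        (fun h => absurd (Finset.mem_univ k) h)
    have hbk : (v k ⬝ᵥ uN) * (v k ⬝ᵥ uN) = 1 := by
      rw [← hsum2, hdot uN uN, huu]
    have hbk0 : v k ⬝ᵥ uN ≠ 0 := by
      intro h; rw [h, mul_zero] at hbk; norm_num at hbk
    have hsum3 : ∑ i, (v i ⬝ᵥ uN) * (v i ⬝ᵥ z) = (v k ⬝ᵥ uN) * (v k ⬝ᵥ z) :=
      Finset.sum_eq_single k (fun i _ hi => by rw [hbzero i hi]; ring)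
        (fun h => absurd (Finset.mem_univ k) h)
    have hak : v k ⬝ᵥ z = 0 := by
      have h1 : (v k ⬝ᵥ uN) * (v k ⬝ᵥ z) = 0 := by
        rw [← hsum3, hdot uN z, hz]
      rcases mul_eq_zero.mp h1 with h4 | h4
      · exact absurd h4 hbk0
      · exact h4
    rw [hquad, ← hdot z z, Finset.mul_sum]
    refine Finset.sum_le_sum fun i _ => ?_
    rcases eq_or_ne i k with rfl | hi
    · rw [hak]; simp
    · calc β l1 * ((v i ⬝ᵥ z) * (v i ⬝ᵥ z)) = β l1 * (v i ⬝ᵥ z) ^ 2 := by ring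
        _ ≤ μ i * (v i ⬝ᵥ z) ^ 2 := mul_le_mul_of_nonneg_right (hμother i hi) (sq_nonneg _)

end Aux

/-- Smallest eigenvalue of a Hermitian real matrix. -/
noncomputable def smallestEig {n : ℕ} {M : Matrix (Fin n) (Fin n) ℝ}
    (hM : M.IsHermitian) : ℝ := ⨅ i, hM.eigenvalues i

/-- the auxiliary bound (3.3) in the proof of Theorem `l_1`:
λ_min(A + yyᵀ) ≥ min{β_N + y_N²·gap/(gap + ξ²), β_{N-1}·y_N²/ξ²}. -/
theorem rank_one_update_min_lower_bound
    {n : ℕ} (hn : 2 ≤ n)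
    (A : Matrix (Fin n) (Fin n) ℝ) (hA : A.PosSemidef)
    (β : Fin n → ℝ) (hmono : Antitone β)
    (hperm : ∃ σ : Equiv.Perm (Fin n), β = hA.isHermitian.eigenvalues ∘ σ)
    (uN : Fin n → ℝ) (hunit : ∑ i, uN i ^ 2 = 1)
    (heig : A.mulVec uN = β ⟨n - 1, by omega⟩ • uN)
    (y : Fin n → ℝ) (hy : y ≠ 0)
    (yN gap ξ : ℝ)
    (hyN : yN = ∑ i, uN i * y i)
    (hgap : gap = β ⟨n - 2, by omega⟩ - β ⟨n - 1, by omega⟩)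
    (hξ : ξ = |yN| + Real.sqrt ((∑ i, y i ^ 2) - yN ^ 2))
    -- the second term is interpreted appropriately when ξ = 0 (then y_N = 0 forces
    -- y = 0, excluded; we assume ξ ≠ 0)
    (hξ0 : ξ ≠ 0)
    (hAy : (A + Matrix.vecMulVec y y).IsHermitian) :
    min (β ⟨n - 1, by omega⟩ + yN ^ 2 * (gap / (gap + ξ ^ 2)))
        (β ⟨n - 2, by omega⟩ * yN ^ 2 / ξ ^ 2)
      ≤ smallestEig hAy := by
  have hperm' := hperm
  obtain ⟨σ, hσ⟩ := hperm'
  set lN : Fin n := ⟨n - 1, by omega⟩ with hlN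
  set l1 : Fin n := ⟨n - 2, by omega⟩ with hl1
  set t := min (β lN + yN ^ 2 * (gap / (gap + ξ ^ 2))) (β l1 * yN ^ 2 / ξ ^ 2) with htdef
  -- basic positivity facts
  have hβμ : ∀ j, β j = hA.isHermitian.eigenvalues (σ j) := fun j => by rw [hσ]; rfl
  have hβN0 : 0 ≤ β lN := by rw [hβμ lN]; exact hA.eigenvalues_nonneg _
  have hG0 : 0 ≤ gap := by
    rw [hgap]
    have h := hmono (show l1 ≤ lN by rw [Fin.le_def]; simp only [lN, l1]; omega)
    linarith
  have hβ1 : β l1 = β lN + gap := by rw [hgap]; ring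
  have hdotself : ∀ p : Fin n → ℝ, 0 ≤ p ⬝ᵥ p :=
    fun p => Finset.sum_nonneg fun i _ => mul_self_nonneg _
  -- decomposition of y
  have huu : uN ⬝ᵥ uN = 1 := by
    rw [← hunit]; exact Finset.sum_congr rfl fun i _ => by ring
  have huNy : uN ⬝ᵥ y = yN := by rw [hyN]; rfl
  have hyu : y ⬝ᵥ uN = yN := by rw [dotProduct_comm]; exact huNy
  set w : Fin n → ℝ := y - yN • uN with hw
  have hww : w ⬝ᵥ w = (∑ i, y i ^ 2) - yN ^ 2 := by
    have hyy : y ⬝ᵥ y = ∑ i, y i ^ 2 := Finset.sum_congr rfl fun i _ => by ring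
    simp only [hw, sub_dotProduct, dotProduct_sub, smul_dotProduct, dotProduct_smul,
      smul_eq_mul, huu, huNy, hyu, hyy]
    ring
  set b := Real.sqrt (w ⬝ᵥ w) with hbdef
  have hb0 : 0 ≤ b := Real.sqrt_nonneg _
  have hb2 : b ^ 2 = w ⬝ᵥ w := Real.sq_sqrt (hdotself w)
  have hξd : ξ = |yN| + b := by rw [hξ, hbdef, hww]
  have hξpos : 0 < ξ := by
    rcases lt_or_eq_of_le (by rw [hξd]; positivity : (0:ℝ) ≤ ξ) with h | h
    · exact h
    · exact absurd h.symm hξ0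
  -- the quadratic form bound
  have hquadx : ∀ x : Fin n → ℝ, t * (x ⬝ᵥ x) ≤ x ⬝ᵥ ((A + Matrix.vecMulVec y y) *ᵥ x) := by
    intro x
    have hAt : Aᵀ = A := by
      have := hA.isHermitian.eq
      rwa [Matrix.conjTranspose_eq_transpose_of_trivial] at this
    have hsym : ∀ p q : Fin n → ℝ, p ⬝ᵥ A *ᵥ q = (A *ᵥ p) ⬝ᵥ q := by
      intro p q
      rw [Matrix.dotProduct_mulVec, ← Matrix.mulVec_transpose, hAt]
    set c := uN ⬝ᵥ x with hc
    set z : Fin n → ℝ := x - c • uN with hzdef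
    have hxu : x ⬝ᵥ uN = c := by rw [dotProduct_comm]
    have huz : uN ⬝ᵥ z = 0 := by
      simp only [hzdef, dotProduct_sub, dotProduct_smul, smul_eq_mul, huu]
      ring
    have hzz : z ⬝ᵥ z = x ⬝ᵥ x - c ^ 2 := by
      simp only [hzdef, sub_dotProduct, dotProduct_sub, smul_dotProduct, dotProduct_smul,
        smul_eq_mul, hxu, huu]
      ring
    have huAx : uN ⬝ᵥ (A *ᵥ x) = β lN * c := by
      rw [hsym uN x, heig, smul_dotProduct]
      simp only [smul_eq_mul, hc]
    have hxAu : x ⬝ᵥ (A *ᵥ uN) = β lN * c := by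
      rw [heig, dotProduct_smul, smul_eq_mul, hxu]
    have hzAz : z ⬝ᵥ A *ᵥ z = x ⬝ᵥ A *ᵥ x - c ^ 2 * β lN := by
      simp only [hzdef, sub_dotProduct, dotProduct_sub, Matrix.mulVec_sub, Matrix.mulVec_smul,
        smul_dotProduct, dotProduct_smul, smul_eq_mul, huAx, hxAu, heig, hxu, huu]
      ring
    have hwz : w ⬝ᵥ z = y ⬝ᵥ x - c * yN := by
      simp only [hw, hzdef, sub_dotProduct, dotProduct_sub, smul_dotProduct, dotProduct_smul,
        smul_eq_mul, huu, huNy, hyu, hxu]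
      ring
    set s := Real.sqrt (z ⬝ᵥ z) with hsdef
    have hs0 : 0 ≤ s := Real.sqrt_nonneg _
    have hs2 : s ^ 2 = z ⬝ᵥ z := Real.sq_sqrt (hdotself z)
    have hCS : (w ⬝ᵥ z) ^ 2 ≤ b ^ 2 * s ^ 2 := by
      rw [hb2, hs2]
      have h2 : (∑ i, w i * z i) ^ 2 ≤ (∑ i, w i ^ 2) * (∑ i, z i ^ 2) :=
        Finset.sum_mul_sq_le_sq_mul_sq Finset.univ w z
      have e1 : w ⬝ᵥ w = ∑ i, w i ^ 2 := Finset.sum_congr rfl fun i _ => by ring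
      have e2 : z ⬝ᵥ z = ∑ i, z i ^ 2 := Finset.sum_congr rfl fun i _ => by ring
      rw [e1, e2]
      exact h2
    -- spectral bound on z
    have hspec := eig_perp_bound hn A hA β hmono hperm uN hunit heig z huz
    -- scalar inequality
    have hkey := key_scalar' (β lN) gap ξ yN b s (w ⬝ᵥ z) t c hβN0 hG0 hb0 hs0 hξd hξpos hCS
      (by rw [htdef, ← hβ1])
    -- expand the quadratic form
    have hvmv : x ⬝ᵥ (Matrix.vecMulVec y y *ᵥ x) = (y ⬝ᵥ x) ^ 2 := by
      have h1 : Matrix.vecMulVec y y *ᵥ x = (y ⬝ᵥ x) • y := by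
        ext i
        simp only [Matrix.mulVec, Matrix.vecMulVec_apply, dotProduct, Pi.smul_apply,
          smul_eq_mul, Finset.sum_mul, Finset.mul_sum]
        exact Finset.sum_congr rfl fun j _ => by ring
      rw [h1, dotProduct_smul, smul_eq_mul, dotProduct_comm]
      ring
    have hexp : x ⬝ᵥ ((A + Matrix.vecMulVec y y) *ᵥ x)
        = x ⬝ᵥ A *ᵥ x + (y ⬝ᵥ x) ^ 2 := by
      rw [Matrix.add_mulVec, dotProduct_add, hvmv]
    rw [hexp]
    have hxx : x ⬝ᵥ x = c ^ 2 + s ^ 2 := by rw [hs2, hzz]; ring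
    rw [hxx]
    have hfin : β lN * c ^ 2 + (β lN + gap) * s ^ 2 + (c * yN + w ⬝ᵥ z) ^ 2
        ≤ x ⬝ᵥ A *ᵥ x + (y ⬝ᵥ x) ^ 2 := by
      have h1 : (c * yN + w ⬝ᵥ z) ^ 2 = (y ⬝ᵥ x) ^ 2 := by rw [hwz]; ring
      have h2 : (β lN + gap) * s ^ 2 ≤ z ⬝ᵥ A *ᵥ z := by
        rw [hs2, ← hβ1]
        exact hspec
      have h3 : β lN * c ^ 2 + z ⬝ᵥ A *ᵥ z = x ⬝ᵥ A *ᵥ x := by rw [hzAz]; ring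
      nlinarith [h2]
    exact le_trans hkey hfin
  -- conclude via eigenvalues of the updated matrix
  rw [smallestEig]
  haveI : Nonempty (Fin n) := ⟨⟨0, by omega⟩⟩
  refine le_ciInf fun i => ?_
  have hv1 := unit_dot' (hAy.eigenvectorBasis) i
  have hMv := hAy.mulVec_eigenvectorBasis i
  have h := hquadx ((hAy.eigenvectorBasis i : Fin n → ℝ))
  have h2 : (hAy.eigenvectorBasis i : Fin n → ℝ) ⬝ᵥ
      ((A + Matrix.vecMulVec y y) *ᵥ (hAy.eigenvectorBasis i : Fin n → ℝ))
      = hAy.eigenvalues i := by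
    rw [show ((A + Matrix.vecMulVec y y) *ᵥ (hAy.eigenvectorBasis i : Fin n → ℝ))
        = hAy.eigenvalues i • (hAy.eigenvectorBasis i : Fin n → ℝ) from hMv,
      dotProduct_smul, smul_eq_mul, hv1, mul_one]
  rw [hv1, mul_one] at h
  exact le_of_le_of_eq h h2
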